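/- arXiv:1603.04376 — 2 statements merged into one kernel-verified Lean document; each statement's English description precedes it below -/
import Mathlib

section
/- If M is a proper marker set of a graph G (i.e., M is a set of edges containing at least one edge from each connected component of G that is not an isolated vertex), then G has exactly one consistent cut (V1, V2) with M ⊆ E(G[V1]), namely (V(G), ∅). -/
theorem SimpleGraph.Reachable.mem_iff_of_adj {V : Type*} {G : SimpleGraph V} {A : Set V}
    (hA : ∀ u v : V, G.Adj u v → (u ∈ A ↔ v ∈ A)) {u v : V} (h : G.Reachable u v) :
    u ∈ A ↔ v ∈ A := by
  obtain ⟨p⟩ := h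
  induction p with
  | nil => rfl
  | cons huv _ ih => exact (hA _ _ huv).trans ih

theorem copath_stmt1_general {V : Type*} (G : SimpleGraph V) (M : Set (Sym2 V))
    (proper : ∀ v : V, (∃ w, G.Adj v w) →
      ∃ u w : V, G.Adj u w ∧ s(u, w) ∈ M ∧ G.Reachable v u) :
    {A : Set V | (∀ u v : V, G.Adj u v → (u ∈ A ↔ v ∈ A)) ∧
        (∀ v : V, (∀ w : V, ¬ G.Adj v w) → v ∈ A) ∧
        (∀ u w : V, s(u, w) ∈ M → u ∈ A ∧ w ∈ A)} = {Set.univ} := by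
  ext A
  simp only [Set.mem_ofPred_eq, Set.mem_singleton_iff]
  constructor
  · rintro ⟨hadj, hisolated, hmarked⟩
    refine Set.eq_univ_of_forall fun v => ?_
    by_cases hv : ∃ w, G.Adj v w
    · obtain ⟨u, w, -, huw, hvu⟩ := proper v hv
      exact (hvu.mem_iff_of_adj hadj).mpr (hmarked u w huw).1
    · exact hisolated v fun w hw => hv ⟨w, hw⟩
  · rintro rfl
    exact ⟨fun _ _ _ => Iff.rfl, fun _ _ => trivial, fun _ _ _ => ⟨trivial, trivial⟩⟩

/-- If `M` is a proper marker set of `G` (a set of edges meeting every non-isolated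
connected component), then the unique consistent cut `(V1, V2)` with `M ⊆ E(G[V1])`
is `(V(G), ∅)`, i.e. the only admissible `V1` is `Set.univ`. -/
theorem copath_stmt1 {V : Type*} [Fintype V] (G : SimpleGraph V) (M : Set (Sym2 V))
    (hM : M ⊆ G.edgeSet)
    (proper : ∀ v : V, (∃ w, G.Adj v w) →
      ∃ u w : V, G.Adj u w ∧ s(u, w) ∈ M ∧ G.Reachable v u) :
    {A : Set V | (∀ u v : V, G.Adj u v → (u ∈ A ↔ v ∈ A)) ∧
        (∀ v : V, (∀ w : V, ¬ G.Adj v w) → v ∈ A) ∧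
        (∀ u w : V, s(u, w) ∈ M → u ∈ A ∧ w ∈ A)} = {Set.univ} :=
  copath_stmt1_general G M proper
end

section
/- (Isolation Lemma) Let F be a non-empty family of subsets of a finite universe U of size u, and let N be a positive integer. If a weight function ω: U → {1, ..., N} is chosen uniformly at random (each ω(x) independent and uniform), then with probability at least 1 − u/N there is a unique set S ∈ F minimizing ω(S) = Σ_{x∈S} ω(x). -/
/-!
If the minimizer is not unique, two minimizing sets differ in some element `x`, which then lies
in one minimizing set and outside another; call `x` ambiguous. Once the weights off `x` are
fixed, the minimum over the sets avoiding `x` is fixed, while the minimum over the sets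
containing `x` is `ω(x)` plus a fixed quantity; ambiguity forces these two to be equal, so at
most one of the `N` values of `ω(x)` makes `x` ambiguous. Hence at most `N ^ (u - 1)` weight
functions make a given `x` ambiguous, and a union bound over the `u` elements gives the claim.
-/

open Finset

section Ambiguity

variable {U M : Type*} [AddCommMonoid M]

def IsAmbiguous [Preorder M] (F : Finset (Finset U)) (w : U → M) (x : U) : Prop :=
  (∃ S ∈ F, x ∈ S ∧ IsMinOn (fun S ↦ ∑ y ∈ S, w y) F S) ∧
    ∃ T ∈ F, x ∉ T ∧ IsMinOn (fun T ↦ ∑ y ∈ T, w y) F T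

theorem exists_isAmbiguous_of_not_existsUnique_isMinOn [LinearOrder M]
    {F : Finset (Finset U)} (hF : F.Nonempty) (w : U → M)
    (h : ¬ ∃! S, S ∈ F ∧ IsMinOn (fun S ↦ ∑ y ∈ S, w y) F S) :
    ∃ x, IsAmbiguous F w x := by
  classical
  obtain ⟨S, hSF, hSmin⟩ := F.exists_min_image (fun S ↦ ∑ y ∈ S, w y) hF
  have hS : S ∈ F ∧ IsMinOn (fun S ↦ ∑ y ∈ S, w y) F S := ⟨hSF, isMinOn_iff.2 hSmin⟩
  obtain ⟨T, hT, hTS⟩ : ∃ T, (T ∈ F ∧ IsMinOn (fun S ↦ ∑ y ∈ S, w y) F T) ∧ T ≠ S := by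
    by_contra! hcon
    exact h ⟨S, hS, hcon⟩
  obtain ⟨x, hx⟩ := symmDiff_nonempty.2 hTS
  rcases mem_symmDiff.1 hx with ⟨hxT, hxS⟩ | ⟨hxS, hxT⟩
  · exact ⟨x, ⟨T, hT.1, hxT, hT.2⟩, S, hS.1, hxS, hS.2⟩
  · exact ⟨x, ⟨S, hS.1, hxS, hS.2⟩, T, hT.1, hxT, hT.2⟩

variable [PartialOrder M] [IsOrderedCancelAddMonoid M]

theorem le_of_isMinOn_mem_of_isMinOn_notMem {F : Finset (Finset U)} {w₁ w₂ : U → M} {x : U}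
    (hw : ∀ y ≠ x, w₁ y = w₂ y) {S T : Finset U} (hS : S ∈ F) (hxS : x ∈ S)
    (hSmin : IsMinOn (fun S ↦ ∑ y ∈ S, w₁ y) F S) (hT : T ∈ F) (hxT : x ∉ T)
    (hTmin : IsMinOn (fun T ↦ ∑ y ∈ T, w₂ y) F T) :
    w₁ x ≤ w₂ x := by
  classical
  have hsum : ∀ R : Finset U, x ∉ R → ∑ y ∈ R, w₁ y = ∑ y ∈ R, w₂ y := fun R hxR ↦
    sum_congr rfl fun y hy ↦ hw y (ne_of_mem_of_not_mem hy hxR)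
  refine le_of_add_le_add_right (a := ∑ y ∈ S.erase x, w₁ y) ?_
  calc w₁ x + ∑ y ∈ S.erase x, w₁ y = ∑ y ∈ S, w₁ y := add_sum_erase S w₁ hxS
    _ ≤ ∑ y ∈ T, w₁ y := isMinOn_iff.1 hSmin T hT
    _ = ∑ y ∈ T, w₂ y := hsum T hxT
    _ ≤ ∑ y ∈ S, w₂ y := isMinOn_iff.1 hTmin S hS
    _ = w₂ x + ∑ y ∈ S.erase x, w₁ y := by
      rw [← add_sum_erase S w₂ hxS, hsum _ (notMem_erase x S)]

theorem IsAmbiguous.eq_of_forall_ne {F : Finset (Finset U)} {w₁ w₂ : U → M} {x : U}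
    (hw : ∀ y ≠ x, w₁ y = w₂ y) (h₁ : IsAmbiguous F w₁ x) (h₂ : IsAmbiguous F w₂ x) :
    w₁ x = w₂ x := by
  obtain ⟨⟨S₁, hS₁, hxS₁, hS₁min⟩, T₁, hT₁, hxT₁, hT₁min⟩ := h₁
  obtain ⟨⟨S₂, hS₂, hxS₂, hS₂min⟩, T₂, hT₂, hxT₂, hT₂min⟩ := h₂
  exact le_antisymm
    (le_of_isMinOn_mem_of_isMinOn_notMem hw hS₁ hxS₁ hS₁min hT₂ hxT₂ hT₂min)
    (le_of_isMinOn_mem_of_isMinOn_notMem (fun y hy ↦ (hw y hy).symm) hS₂ hxS₂ hS₂min hT₁ hxT₁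
      hT₁min)

end Ambiguity

theorem card_le_card_pow_div_of_injOn_restrict {U α : Type*} [Fintype U] [Fintype α] (x : U)
    {A : Finset (U → α)} (hA : Set.InjOn (fun (f : U → α) (y : {y // y ≠ x}) ↦ f y) A) :
    (#A : ℝ) ≤ Fintype.card α ^ Fintype.card U / Fintype.card α := by
  classical
  rcases isEmpty_or_nonempty α with hα | hα
  · have : IsEmpty (U → α) := isEmpty_fun.2 ⟨⟨x⟩, hα⟩
    simp [eq_empty_of_isEmpty A]
  have hcard : #A ≤ Fintype.card α ^ (Fintype.card U - 1) := by
    calc #A ≤ Fintype.card ({y // y ≠ x} → α) :=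
          card_le_card_of_injOn _ (fun _ _ ↦ mem_coe.2 (mem_univ _)) hA
      _ = Fintype.card α ^ (Fintype.card U - 1) := by
        simp [Fintype.card_subtype_compl]
  have hU : Fintype.card U = Fintype.card U - 1 + 1 :=
    (Nat.sub_add_cancel (Fintype.card_pos_iff.2 ⟨x⟩)).symm
  rw [hU, pow_succ, mul_div_cancel_right₀ _ (by positivity)]
  exact_mod_cast hcard

theorem copath_stmt13_general {U : Type*} [Fintype U]
    (F : Finset (Finset U)) (hF : F.Nonempty) (N : ℕ) :
    (1 - (Fintype.card U : ℝ) / N) * (N : ℝ) ^ (Fintype.card U) ≤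
      (Nat.card {ω : U → Fin N // ∃! S : Finset U, S ∈ F ∧
        ∀ T ∈ F, (∑ x ∈ S, ((ω x : ℕ) + 1)) ≤ ∑ x ∈ T, ((ω x : ℕ) + 1)} : ℝ) := by
  classical
  set w : (U → Fin N) → U → ℕ := fun ω x ↦ (ω x : ℕ) + 1
  set isolating : (U → Fin N) → Prop :=
    fun ω ↦ ∃! S, S ∈ F ∧ IsMinOn (fun S ↦ ∑ y ∈ S, w ω y) F S
  have hinj : ∀ x, Set.InjOn (fun (ω : U → Fin N) (y : {y // y ≠ x}) ↦ ω y)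
      (({ω | IsAmbiguous F (w ω) x} : Finset _) : Set (U → Fin N)) := fun x ω₁ h₁ ω₂ h₂ hω ↦ by
    simp only [coe_filter, mem_univ, true_and, Set.mem_ofPred_eq] at h₁ h₂
    have hne : ∀ y ≠ x, ω₁ y = ω₂ y := fun y hy ↦ congrFun hω ⟨y, hy⟩
    have hx : w ω₁ x = w ω₂ x := h₁.eq_of_forall_ne (fun y hy ↦ by simp [w, hne y hy]) h₂
    funext y
    rcases eq_or_ne y x with rfl | hy
    · exact Fin.ext (Nat.succ_injective hx)
    · exact hne y hy
  have hbad : (#{ω | ¬ isolating ω} : ℝ) ≤ Fintype.card U * (N ^ Fintype.card U / N) := by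
    calc (#{ω | ¬ isolating ω} : ℝ) ≤ ∑ x : U, (#{ω | IsAmbiguous F (w ω) x} : ℝ) := by
          refine mod_cast (card_le_card fun ω hω ↦ ?_).trans card_biUnion_le
          simpa using exists_isAmbiguous_of_not_existsUnique_isMinOn hF (w ω) (by simpa using hω)
      _ ≤ ∑ _x : U, (N ^ Fintype.card U / N : ℝ) := sum_le_sum fun x _ ↦ by
          simpa using card_le_card_pow_div_of_injOn_restrict x (hinj x)
      _ = _ := by simp
  have hsplit : (#{ω | isolating ω} : ℝ) + #{ω | ¬ isolating ω} = N ^ Fintype.card U := by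
    exact_mod_cast (card_filter_add_card_filter_not (s := univ) isolating).trans (by simp)
  change _ ≤ ((Nat.card {ω // isolating ω} : ℕ) : ℝ)
  rw [Nat.card_eq_fintype_card, Fintype.card_subtype]
  linear_combination hbad - hsplit

/-- Isolation Lemma: for a non-empty family `F` of subsets of a finite universe `U` of
size `u`, if each element of `U` independently receives a uniformly random weight in
`{1, …, N}`, then with probability at least `1 − u/N` there is a unique `S ∈ F`
minimizing the total weight. (Probability expressed as a count of weight functions
out of `N ^ u`.) -/
theorem copath_stmt13 {U : Type*} [Fintype U] [DecidableEq U]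
    (F : Finset (Finset U)) (hF : F.Nonempty) (N : ℕ) (hN : 1 ≤ N) :
    (1 - (Fintype.card U : ℝ) / N) * (N : ℝ) ^ (Fintype.card U) ≤
      (Nat.card {ω : U → Fin N // ∃! S : Finset U, S ∈ F ∧
        ∀ T ∈ F, (∑ x ∈ S, ((ω x : ℕ) + 1)) ≤ ∑ x ∈ T, ((ω x : ℕ) + 1)} : ℝ) :=
  copath_stmt13_general F hF N
end
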